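/- arXiv:1405.5065 — 2 statements merged into one kernel-verified Lean document; each statement's English description precedes it below -/
import Mathlib

section
/- Let A be an associative unital ℚ-algebra, and for indices i, j, k let u_{ij}, u_{jk}, u_{ik} ∈ A satisfy the cocycle condition u_{ij} + u_{jk} = u_{ik} and the nilpotency condition that every product of three elements from {u_{ij}, u_{jk}, u_{ik}} vanishes. Then exp(u_{ij})·exp(u_{jk})·exp(u_{ik})⁻¹ = exp((1/2)·[u_{ij}, u_{jk}]). -/
/-- Truncated exponential `exp x = 1 + x + x²/2`. -/
noncomputable def texp {A : Type*} [Ring A] [Algebra ℚ A] (x : A) : A :=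
  1 + x + (2 : ℚ)⁻¹ • (x * x)

/-- **The degree-4 obstruction cochain.** For elements satisfying the cocycle condition
`u_{ij} + u_{jk} = u_{ik}` with all triple products among them vanishing, one has
`exp(u_{ij})·exp(u_{jk})·exp(u_{ik})⁻¹ = exp(½[u_{ij}, u_{jk}])`,
where `exp(u_{ik})⁻¹ = exp(-u_{ik})`. -/
theorem obstruction_cochain {A : Type*} [Ring A] [Algebra ℚ A] (uij ujk uik : A)
    (hcoc : uij + ujk = uik)
    (h : ∀ x y z : A, x ∈ ({uij, ujk, uik} : Set A) → y ∈ ({uij, ujk, uik} : Set A) →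
      z ∈ ({uij, ujk, uik} : Set A) → x * y * z = 0) :
    texp uik * texp (-uik) = 1 ∧
    texp uij * texp ujk * texp (-uik) = texp ((2 : ℚ)⁻¹ • (uij * ujk - ujk * uij)) := by
  subst hcoc
  set a := uij; set b := ujk
  have h3 : ∀ x y z : A, (x = a ∨ x = b) → (y = a ∨ y = b) → (z = a ∨ z = b) →
      x * y * z = 0 := by
    intro x y z hx hy hz
    apply h <;> simp [Set.mem_insert_iff] <;> tauto
  have K3 : ∀ x y z : A, (x = a ∨ x = b) → (y = a ∨ y = b) → (z = a ∨ z = b) →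
      x * (y * z) = 0 := by
    intro x y z hx hy hz; rw [← mul_assoc]; exact h3 x y z hx hy hz
  have K4 : ∀ x y z : A, (x = a ∨ x = b) → (y = a ∨ y = b) → (z = a ∨ z = b) →
      ∀ w : A, x * (y * (z * w)) = 0 := by
    intro x y z hx hy hz w
    rw [show x * (y * (z * w)) = (x * y * z) * w by noncomm_ring, h3 x y z hx hy hz, zero_mul]
  constructor <;>
  · simp only [texp, mul_add, add_mul, mul_one, one_mul, mul_neg, neg_mul, neg_neg,
      smul_mul_assoc, mul_smul_comm, smul_smul, sub_mul, mul_sub, neg_add_rev, mul_assoc,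
      (K3 a a a (Or.inl rfl) (Or.inl rfl) (Or.inl rfl)), (K3 a a b (Or.inl rfl) (Or.inl rfl) (Or.inr rfl)), (K3 a b a (Or.inl rfl) (Or.inr rfl) (Or.inl rfl)), (K3 a b b (Or.inl rfl) (Or.inr rfl) (Or.inr rfl)), (K3 b a a (Or.inr rfl) (Or.inl rfl) (Or.inl rfl)), (K3 b a b (Or.inr rfl) (Or.inl rfl) (Or.inr rfl)), (K3 b b a (Or.inr rfl) (Or.inr rfl) (Or.inl rfl)), (K3 b b b (Or.inr rfl) (Or.inr rfl) (Or.inr rfl)), (K4 a a a (Or.inl rfl) (Or.inl rfl) (Or.inl rfl)), (K4 a a b (Or.inl rfl) (Or.inl rfl) (Or.inr rfl)), (K4 a b a (Or.inl rfl) (Or.inr rfl) (Or.inl rfl)), (K4 a b b (Or.inl rfl) (Or.inr rfl) (Or.inr rfl)), (K4 b a a (Or.inr rfl) (Or.inl rfl) (Or.inl rfl)), (K4 b a b (Or.inr rfl) (Or.inl rfl) (Or.inr rfl)), (K4 b b a (Or.inr rfl) (Or.inr rfl) (Or.inl rfl)), (K4 b b b (Or.inr rfl) (Or.inr rfl) (Or.inr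 rfl)),
      smul_zero, zero_mul, mul_zero, neg_zero, add_zero, zero_add, sub_zero, zero_sub]
    module
end

section
/- Let A be an associative unital ℚ-algebra graded so that u_{ij}, u_{jk}, u_{ik} are 'degree-2' elements with all triple products among them zero. Suppose exp(u_{ij} + a_{ij})·exp(u_{jk} + a_{jk}) = exp(u_{ik} + a_{ik}) for degree-4 elements a_{ij}, a_{jk}, a_{ik} (central, square zero, annihilating degree-2 elements). Then u_{ij} + u_{jk} = u_{ik} and a_{ij} + a_{jk} − a_{ik} = −(1/2)[u_{ij}, u_{jk}]. -/
lemma texp_split {A : Type*} [Ring A] [Algebra ℚ A] (u a : A)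
    (h1 : u * a = 0) (h2 : a * u = 0) (h3 : a * a = 0) :
    texp (u + a) = 1 + u + (2 : ℚ)⁻¹ • (u * u) + a := by
  simp only [texp, mul_add, add_mul, h1, h2, h3, add_zero, zero_add]
  abel

/-- **Cocycle condition in odd dimension 4 and 5.** Let `A` be graded in the sense that there
are submodules `M₂` (degree-2 elements) and `M₄` (degree-4 elements) with `M₂ ⊓ M₄ = ⊥` and
products of two degree-2 elements of degree 4. Let `uij, ujk, uik ∈ M₂` have all triple
products zero, and let `aij, ajk, aik ∈ M₄` annihilate all degree-2 elements and each other.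
If `exp(uij + aij)·exp(ujk + ajk) = exp(uik + aik)`, then `uij + ujk = uik` and
`aij + ajk − aik = −½[uij, ujk]`. -/
theorem cocycle_condition_dim45 {A : Type*} [Ring A] [Algebra ℚ A]
    (M₂ M₄ : Submodule ℚ A)
    (uij ujk uik aij ajk aik : A)
    (hu : uij ∈ M₂ ∧ ujk ∈ M₂ ∧ uik ∈ M₂)
    (ha : aij ∈ M₄ ∧ ajk ∈ M₄ ∧ aik ∈ M₄)
    (hmul : ∀ x ∈ M₂, ∀ y ∈ M₂, x * y ∈ M₄)
    (hindep : M₂ ⊓ M₄ = ⊥)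
    (htriple : ∀ x y z : A, x ∈ ({uij, ujk, uik} : Set A) → y ∈ ({uij, ujk, uik} : Set A) →
      z ∈ ({uij, ujk, uik} : Set A) → x * y * z = 0)
    (hann : ∀ a ∈ ({aij, ajk, aik} : Set A),
      ∀ x ∈ ({uij, ujk, uik, aij, ajk, aik} : Set A), a * x = 0 ∧ x * a = 0)
    (heq : texp (uij + aij) * texp (ujk + ajk) = texp (uik + aik)) :
    uij + ujk = uik ∧
    aij + ajk - aik = -((2 : ℚ)⁻¹ • (uij * ujk - ujk * uij)) := by
  obtain ⟨h2ij, h2jk, h2ik⟩ := hu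
  obtain ⟨h4ij, h4jk, h4ik⟩ := ha
  have mem1 : aij ∈ ({aij, ajk, aik} : Set A) := by simp
  have mem2 : ajk ∈ ({aij, ajk, aik} : Set A) := by simp
  have mem3 : aik ∈ ({aij, ajk, aik} : Set A) := by simp
  have mu1 : uij ∈ ({uij, ujk, uik, aij, ajk, aik} : Set A) := by simp
  have mu2 : ujk ∈ ({uij, ujk, uik, aij, ajk, aik} : Set A) := by simp
  have mu3 : uik ∈ ({uij, ujk, uik, aij, ajk, aik} : Set A) := by simp
  have ma1 : aij ∈ ({uij, ujk, uik, aij, ajk, aik} : Set A) := by simp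
  have ma2 : ajk ∈ ({uij, ujk, uik, aij, ajk, aik} : Set A) := by simp
  have ma3 : aik ∈ ({uij, ujk, uik, aij, ajk, aik} : Set A) := by simp
  have s1 : uij ∈ ({uij, ujk, uik} : Set A) := by simp
  have s2 : ujk ∈ ({uij, ujk, uik} : Set A) := by simp
  have z1 : aij * ujk = 0 := (hann aij mem1 ujk mu2).1
  have z2 : uij * ajk = 0 := (hann ajk mem2 uij mu1).2
  have z3 : aij * ajk = 0 := (hann aij mem1 ajk ma2).1
  have z4 : aij * aij = 0 := (hann aij mem1 aij ma1).1
  have z5 : ajk * ajk = 0 := (hann ajk mem2 ajk ma2).1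
  have z6 : aik * aik = 0 := (hann aik mem3 aik ma3).1
  have z7 : aij * uij = 0 := (hann aij mem1 uij mu1).1
  have z8 : uij * aij = 0 := (hann aij mem1 uij mu1).2
  have z9 : ajk * ujk = 0 := (hann ajk mem2 ujk mu2).1
  have z10 : ujk * ajk = 0 := (hann ajk mem2 ujk mu2).2
  have z11 : aik * uik = 0 := (hann aik mem3 uik mu3).1
  have z12 : uik * aik = 0 := (hann aik mem3 uik mu3).2
  have t1 : uij * (ujk * ujk) = 0 := by
    rw [← mul_assoc]; exact htriple uij ujk ujk s1 s2 s2
  have t2 : uij * uij * ujk = 0 := htriple uij uij ujk s1 s1 s2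
  have t3 : uij * uij * (ujk * ujk) = 0 := by rw [← mul_assoc, t2, zero_mul]
  have t4 : uij * uij * ajk = 0 := by rw [mul_assoc, z2, mul_zero]
  have t5 : aij * (ujk * ujk) = 0 := by rw [← mul_assoc, z1, zero_mul]
  rw [texp_split uij aij z8 z7 z4, texp_split ujk ajk z10 z9 z5,
    texp_split uik aik z12 z11 z6] at heq
  have key : (uij + ujk - uik)
      + ((aij + ajk - aik) + uij * ujk
        + (2:ℚ)⁻¹ • (uij * uij) + (2:ℚ)⁻¹ • (ujk * ujk) - (2:ℚ)⁻¹ • (uik * uik)) = 0 := by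
    have expand : (1 + uij + (2:ℚ)⁻¹ • (uij*uij) + aij) * (1 + ujk + (2:ℚ)⁻¹ • (ujk*ujk) + ajk)
        = 1 + uij + ujk + aij + ajk + uij * ujk
          + (2:ℚ)⁻¹ • (uij * uij) + (2:ℚ)⁻¹ • (ujk * ujk) := by
      simp only [mul_add, add_mul, one_mul, mul_one, smul_mul_assoc, mul_smul_comm,
        z1, z2, z3, t1, t2, t3, t4, t5, smul_zero, zero_mul, mul_zero, add_zero, smul_smul]
      abel
    rw [expand] at heq
    have := sub_eq_zero_of_eq heq
    rw [← this]; abel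
  -- separate degrees
  have hxM2 : uij + ujk - uik ∈ M₂ := by
    exact sub_mem (add_mem h2ij h2jk) h2ik
  have hyM4 : (aij + ajk - aik) + uij * ujk
      + (2:ℚ)⁻¹ • (uij * uij) + (2:ℚ)⁻¹ • (ujk * ujk) - (2:ℚ)⁻¹ • (uik * uik) ∈ M₄ := by
    refine sub_mem (add_mem (add_mem (add_mem (sub_mem (add_mem h4ij h4jk) h4ik)
      (hmul _ h2ij _ h2jk)) ?_) ?_) ?_ <;>
      exact Submodule.smul_mem _ _ (hmul _ (by assumption) _ (by assumption))
  have hx0 : uij + ujk - uik = 0 := by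
    have hxmem : uij + ujk - uik ∈ M₂ ⊓ M₄ := by
      refine ⟨hxM2, ?_⟩
      rw [eq_neg_of_add_eq_zero_left key]
      exact neg_mem hyM4
    rw [hindep] at hxmem
    simpa using hxmem
  have h1 : uij + ujk = uik := sub_eq_zero.mp hx0
  constructor
  · exact h1
  · have hy0 : (aij + ajk - aik) + uij * ujk
        + (2:ℚ)⁻¹ • (uij * uij) + (2:ℚ)⁻¹ • (ujk * ujk) - (2:ℚ)⁻¹ • (uik * uik) = 0 := by
      rw [hx0, zero_add] at key; exact key
    have hsq : uik * uik = uij*uij + uij*ujk + ujk*uij + ujk*ujk := by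
      rw [← h1]; noncomm_ring
    rw [hsq] at hy0
    apply eq_neg_of_add_eq_zero_left
    rw [← hy0]
    module
end
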